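/- arXiv:1808.05905 — 5 statements merged into one kernel-verified Lean document; each statement's English description precedes it below -/
import Mathlib

section
/- Characteristic polynomial of the symbol: let m, n, v, u, p_m, p_n ∈ ℝ with n ≠ 0, let ξ = (ξ₁, ξ₂) ∈ ℝ², and set w := vξ₁ + uξ₂. Then for every λ ∈ ℝ, det(λ·I₄ − (ξ₁A₁(U) + ξ₂A₂(U))) = (λ − w)²·((λ − w)² − ((m·p_m + n·p_n)/n)·(ξ₁² + ξ₂²)). -/
/-- The coefficient matrix `A₁(U)` of the quasilinear two-phase flow system,
for `U = (m,n,v,u)` and pressure partial derivatives `pm, pn`. -/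
noncomputable def A1 (m n v u pm pn : ℝ) : Matrix (Fin 4) (Fin 4) ℝ :=
  !![v, 0, m, 0;
     0, v, n, 0;
     pm / n, pn / n, v, 0;
     0, 0, 0, v]

/-- The coefficient matrix `A₂(U)` of the quasilinear two-phase flow system. -/
noncomputable def A2 (m n v u pm pn : ℝ) : Matrix (Fin 4) (Fin 4) ℝ :=
  !![u, 0, 0, m;
     0, u, 0, n;
     0, 0, u, 0;
     pm / n, pn / n, 0, u]

/-!
In the splitting `ℝ⁴ = ℝ² × ℝ²`, the matrix `λI₄ − (ξ₁A₁ + ξ₂A₂)` has the scalar diagonal blocks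
`(λ − w)I₂` and the rank-one off-diagonal blocks `−p ξᵀ` and `−ξ qᵀ`, where `p = (m, n)` and
`q = (p_m/n, p_n/n)`. Its Schur complement is `(λ − w)²I₂ − (q ⬝ p) ξ ξᵀ`, whose determinant is
`(λ − w)² ((λ − w)² − (q ⬝ p)|ξ|²)`, and `q ⬝ p = (m p_m + n p_n)/n`.
-/

theorem det_scalar_sub_offDiag_rankOne_fin_four {R : Type*} [CommRing R]
    (a x₁ x₂ p₁ p₂ q₁ q₂ : R) :
    !![a, 0, -(x₁ * p₁), -(x₂ * p₁);
       0, a, -(x₁ * p₂), -(x₂ * p₂);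
       -(x₁ * q₁), -(x₁ * q₂), a, 0;
       -(x₂ * q₁), -(x₂ * q₂), 0, a].det
      = a ^ 2 * (a ^ 2 - (p₁ * q₁ + p₂ * q₂) * (x₁ ^ 2 + x₂ ^ 2)) := by
  rw [Matrix.det_succ_row_zero]
  simp only [Fin.sum_univ_succ, Matrix.det_fin_three, Matrix.submatrix_apply, Matrix.of_apply,
    Matrix.cons_val, Fin.succAbove, Fin.reduceSucc, Fin.reduceCastSucc, Fin.reduceLT,
    Fin.coe_ofNat_eq_mod, ↓reduceIte]
  ring

theorem smul_one_sub_symbol_eq (m n v u pm pn ξ1 ξ2 lam : ℝ) :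
    lam • (1 : Matrix (Fin 4) (Fin 4) ℝ) - (ξ1 • A1 m n v u pm pn + ξ2 • A2 m n v u pm pn)
      = let a := lam - (v * ξ1 + u * ξ2)
        !![a, 0, -(ξ1 * m), -(ξ2 * m);
           0, a, -(ξ1 * n), -(ξ2 * n);
           -(ξ1 * (pm / n)), -(ξ1 * (pn / n)), a, 0;
           -(ξ2 * (pm / n)), -(ξ2 * (pn / n)), 0, a] := by
  ext i j
  fin_cases i <;> fin_cases j <;> simp [A1, A2] <;> ring

theorem charpoly_symbol_general (m n v u pm pn ξ1 ξ2 lam : ℝ) :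
    (lam • (1 : Matrix (Fin 4) (Fin 4) ℝ)
        - (ξ1 • A1 m n v u pm pn + ξ2 • A2 m n v u pm pn)).det
      = (lam - (v * ξ1 + u * ξ2)) ^ 2 *
        ((lam - (v * ξ1 + u * ξ2)) ^ 2
          - ((m * pm + n * pn) / n) * (ξ1 ^ 2 + ξ2 ^ 2)) := by
  rw [smul_one_sub_symbol_eq, det_scalar_sub_offDiag_rankOne_fin_four]
  ring

/-- Characteristic polynomial of the symbol `ξ₁A₁(U) + ξ₂A₂(U)`:
`det(λI₄ − (ξ₁A₁ + ξ₂A₂)) = (λ−w)²((λ−w)² − ((m·p_m+n·p_n)/n)(ξ₁²+ξ₂²))`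
where `w = vξ₁ + uξ₂`. -/
theorem charpoly_symbol (m n v u pm pn ξ1 ξ2 lam : ℝ) (hn : n ≠ 0) :
    (lam • (1 : Matrix (Fin 4) (Fin 4) ℝ)
        - (ξ1 • A1 m n v u pm pn + ξ2 • A2 m n v u pm pn)).det
      = (lam - (v * ξ1 + u * ξ2)) ^ 2 *
        ((lam - (v * ξ1 + u * ξ2)) ^ 2
          - ((m * pm + n * pn) / n) * (ξ1 ^ 2 + ξ2 ^ 2)) :=
  charpoly_symbol_general m n v u pm pn ξ1 ξ2 lam
end

section
/- Hyperbolicity of the two-phase flow system: let m, n, v, u, p_m, p_n ∈ ℝ with n ≠ 0 and (m·p_m + n·p_n)/n > 0, set c := √((m·p_m + n·p_n)/n), let ξ = (ξ₁, ξ₂) ∈ ℝ² with ξ ≠ 0, and set w := vξ₁ + uξ₂. Then the set of real eigenvalues of the matrix ξ₁A₁(U) + ξ₂A₂(U) (i.e. the set of λ ∈ ℝ with det(λ·I₄ − (ξ₁A₁(U)+ξ₂A₂(U))) = 0) is exactly {w − c·‖ξ‖, w, w + c·‖ξ‖}, where ‖ξ‖ = √(ξ₁²+ξ₂²); in particular all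 roots of the characteristic polynomial are real. -/
theorem det_smul_one_sub_symbol (m n v u pm pn ξ1 ξ2 lam : ℝ) :
    (lam • (1 : Matrix (Fin 4) (Fin 4) ℝ)
        - (ξ1 • A1 m n v u pm pn + ξ2 • A2 m n v u pm pn)).det
      = (lam - (v * ξ1 + u * ξ2)) ^ 2
          * ((lam - (v * ξ1 + u * ξ2)) ^ 2 - (m * pm + n * pn) / n * (ξ1 ^ 2 + ξ2 ^ 2)) := by
  simp [Matrix.det_succ_row_zero, Fin.sum_univ_succ, A1, A2, Fin.succAbove, Matrix.one_apply]
  ring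

theorem sq_sub_mul_sq_sub_sub_sq_eq_zero_iff {R : Type*} [CommRing R] [IsDomain R] (x w c : R) :
    (x - w) ^ 2 * ((x - w) ^ 2 - c ^ 2) = 0 ↔ x = w - c ∨ x = w ∨ x = w + c := by
  rw [mul_eq_zero, pow_eq_zero_iff two_ne_zero, sub_eq_zero (a := (x - w) ^ 2),
    sq_eq_sq_iff_eq_or_eq_neg, sub_eq_zero, sub_eq_iff_eq_add', sub_eq_iff_eq_add',
    ← sub_eq_add_neg]
  tauto

theorem eigenvalues_symbol_general (m n v u pm pn ξ1 ξ2 : ℝ)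
    (hc : 0 < (m * pm + n * pn) / n) :
    {lam : ℝ |
        (lam • (1 : Matrix (Fin 4) (Fin 4) ℝ)
          - (ξ1 • A1 m n v u pm pn + ξ2 • A2 m n v u pm pn)).det = 0}
      = {v * ξ1 + u * ξ2
            - Real.sqrt ((m * pm + n * pn) / n) * Real.sqrt (ξ1 ^ 2 + ξ2 ^ 2),
         v * ξ1 + u * ξ2,
         v * ξ1 + u * ξ2
            + Real.sqrt ((m * pm + n * pn) / n) * Real.sqrt (ξ1 ^ 2 + ξ2 ^ 2)} := by
  have hspeed : (Real.sqrt ((m * pm + n * pn) / n) * Real.sqrt (ξ1 ^ 2 + ξ2 ^ 2)) ^ 2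
      = (m * pm + n * pn) / n * (ξ1 ^ 2 + ξ2 ^ 2) := by
    rw [mul_pow, Real.sq_sqrt hc.le, Real.sq_sqrt (by positivity)]
  ext lam
  simp only [Set.mem_ofPred_eq, det_smul_one_sub_symbol, ← hspeed,
    sq_sub_mul_sq_sub_sub_sq_eq_zero_iff, Set.mem_insert_iff, Set.mem_singleton_iff]

/-- Hyperbolicity: if `(m·p_m+n·p_n)/n > 0`, `c = √((m·p_m+n·p_n)/n)` and
`ξ = (ξ₁,ξ₂) ≠ 0`, then the real eigenvalues of `ξ₁A₁(U)+ξ₂A₂(U)` are exactly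
`{w − c‖ξ‖, w, w + c‖ξ‖}` with `w = vξ₁ + uξ₂` and `‖ξ‖ = √(ξ₁²+ξ₂²)`. -/
theorem eigenvalues_symbol (m n v u pm pn ξ1 ξ2 : ℝ) (hn : n ≠ 0)
    (hc : 0 < (m * pm + n * pn) / n) (hξ : (ξ1, ξ2) ≠ (0, 0)) :
    {lam : ℝ |
        (lam • (1 : Matrix (Fin 4) (Fin 4) ℝ)
          - (ξ1 • A1 m n v u pm pn + ξ2 • A2 m n v u pm pn)).det = 0}
      = {v * ξ1 + u * ξ2
            - Real.sqrt ((m * pm + n * pn) / n) * Real.sqrt (ξ1 ^ 2 + ξ2 ^ 2),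
         v * ξ1 + u * ξ2,
         v * ξ1 + u * ξ2
            + Real.sqrt ((m * pm + n * pn) / n) * Real.sqrt (ξ1 ^ 2 + ξ2 ^ 2)} :=
  eigenvalues_symbol_general m n v u pm pn ξ1 ξ2 hc
end

section
/- Friedrichs symmetrizer: let m, n, v, u ∈ ℝ with m > 0, n > 0, and let p_m = p_n =: q > 0 (as holds for the pressure p(m,n)=(γ−1)(m+n)^γ). Define the diagonal matrix S := diag(q/m, q/n, n, n). Then (i) S is symmetric and positive definite, and (ii) both products S·A₁(U) and S·A₂(U) are symmetric matrices. -/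
/-- Friedrichs symmetrizer: for `m, n, q > 0` and `p_m = p_n = q`, the diagonal
matrix `S = diag(q/m, q/n, n, n)` is symmetric positive definite and both
`S·A₁(U)` and `S·A₂(U)` are symmetric. -/
theorem friedrichs_symmetrizer (m n v u q : ℝ) (hm : 0 < m) (hn : 0 < n)
    (hq : 0 < q) :
    (Matrix.diagonal ![q / m, q / n, n, n]).IsSymm ∧
    (Matrix.diagonal ![q / m, q / n, n, n]).PosDef ∧
    (Matrix.diagonal ![q / m, q / n, n, n] * A1 m n v u q q).IsSymm ∧
    (Matrix.diagonal ![q / m, q / n, n, n] * A2 m n v u q q).IsSymm := by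
  have hm' := hm.ne'
  have hn' := hn.ne'
  refine ⟨Matrix.isSymm_diagonal _, ?_, ?_, ?_⟩
  · rw [Matrix.posDef_diagonal_iff]
    intro i
    fin_cases i <;> simp <;> positivity
  · rw [Matrix.IsSymm]
    ext i j
    fin_cases i <;> fin_cases j <;>
      simp [A1, Matrix.diagonal_mul, Matrix.transpose_apply] <;>
      field_simp
  · rw [Matrix.IsSymm]
    ext i j
    fin_cases i <;> fin_cases j <;>
      simp [A2, Matrix.diagonal_mul, Matrix.transpose_apply] <;>
      field_simp
end

section
/- Boundary symmetrizer identity: let m, n, v, u ∈ ℝ with m > 0, n > 0, let p_m = p_n =: q, let Φₜ, Φ₁ ∈ ℝ satisfy the eikonal relation Φₜ + v·Φ₁ − u = 0, and let S := diag(q/m, q/n, n, n). Then S·(A₂(U) − Φₜ·I₄ − Φ₁·A₁(U)) equals the explicit symmetric matrix [[0, 0, −q·Φ₁, q], [0, 0, −q·Φ₁, q], [−q·Φ₁, −q·Φ₁, 0, 0], [q, q, 0, 0]]. -/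
/-- Boundary symmetrizer identity: if `Φₜ + v·Φ₁ − u = 0` (eikonal relation) and
`p_m = p_n = q`, then `S·(A₂(U) − Φₜ·I₄ − Φ₁·A₁(U))` with
`S = diag(q/m, q/n, n, n)` equals the explicit symmetric matrix below. -/
theorem boundary_symmetrizer (m n v u q Φt Φ1 : ℝ) (hm : 0 < m) (hn : 0 < n)
    (heik : Φt + v * Φ1 - u = 0) :
    Matrix.diagonal ![q / m, q / n, n, n] *
      (A2 m n v u q q - Φt • (1 : Matrix (Fin 4) (Fin 4) ℝ)
        - Φ1 • A1 m n v u q q)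
    = !![0, 0, -q * Φ1, q;
         0, 0, -q * Φ1, q;
         -q * Φ1, -q * Φ1, 0, 0;
         q, q, 0, 0] := by
  have hu : u = Φt + v * Φ1 := by linarith
  subst hu
  have hm' := hm.ne'
  have hn' := hn.ne'
  ext i j
  fin_cases i <;> fin_cases j <;>
    simp [A1, A2, Matrix.mul_apply, Fin.sum_univ_succ, Matrix.one_apply,
      Matrix.diagonal, Matrix.vecHead, Matrix.vecTail] <;>
    first
      | tauto
      | exact Or.inr (by ring)
      | (field_simp; try ring)
end

section
/- The vortex-sheet boundary is characteristic of constant multiplicity two: let m, n, v, u ∈ ℝ with m > 0, n > 0, let p_m = p_n =: q > 0, and let Φₜ, Φ₁ ∈ ℝ satisfy the eikonal relation Φₜ + v·Φ₁ − u = 0. Then the 4×4 real matrix A₂(U) − Φₜ·I₄ − Φ₁·A₁(U) has rank exactly 2 (equivalently, its kernel has dimension 2). -/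
/-!
With the eikonal relation the diagonal terms cancel, and the boundary matrix factors as
`a wᵀ + w rᵀ` with `a = (m, n, 0, 0)`, `w = (0, 0, -Φ₁, 1)` and `r = (p_m/n, p_n/n, 0, 0)`,
i.e. through `ℝ²`; so its rank is at most two. The `2 × 2` minors of the two factors on rows
2, 4 and columns 1, 4 have determinants `n` and `-p_m/n`, so their product is a nonsingular
minor of the boundary matrix and the rank is exactly two.
-/

namespace Matrix

variable {R : Type*} [CommRing R] [IsDomain R] {m n k : Type*} [Fintype n] [Fintype k]
  [DecidableEq k]

theorem rank_mul_eq_card_of_det_submatrix_ne_zero (B : Matrix m k R) (C : Matrix k n R)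
    (r : k → m) (c : k → n) (hB : (B.submatrix r id).det ≠ 0) (hC : (C.submatrix id c).det ≠ 0) :
    (B * C).rank = Fintype.card k := by
  have hminor : ((B * C).submatrix r c).det ≠ 0 := by
    rw [submatrix_mul B C r id c Function.bijective_id, det_mul]
    exact mul_ne_zero hB hC
  refine le_antisymm ((rank_mul_le_right B C).trans (rank_le_card_height C)) ?_
  calc Fintype.card k = ((B * C).submatrix r c).rank := (rank_of_det_ne_zero hminor).symm
    _ ≤ (B * C).rank := rank_submatrix_le _ r c

end Matrix

theorem boundary_matrix_eq_mul (m n v u pm pn Φt Φ1 : ℝ) (heik : Φt + v * Φ1 - u = 0) :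
    A2 m n v u pm pn - Φt • (1 : Matrix (Fin 4) (Fin 4) ℝ) - Φ1 • A1 m n v u pm pn =
      !![m, 0; n, 0; 0, -Φ1; 0, 1] * !![0, 0, -Φ1, 1; pm / n, pn / n, 0, 0] := by
  have hu : u = Φt + v * Φ1 := by linarith
  ext i j
  fin_cases i <;> fin_cases j <;>
    simp [A1, A2, Matrix.mul_apply, Fin.sum_univ_two, hu, mul_comm]

theorem boundary_matrix_rank_two_general (m n v u q Φt Φ1 : ℝ) (hn : 0 < n)
    (hq : 0 < q) (heik : Φt + v * Φ1 - u = 0) :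
    (A2 m n v u q q - Φt • (1 : Matrix (Fin 4) (Fin 4) ℝ)
      - Φ1 • A1 m n v u q q).rank = 2 := by
  rw [boundary_matrix_eq_mul m n v u q q Φt Φ1 heik]
  refine Matrix.rank_mul_eq_card_of_det_submatrix_ne_zero _ _ ![1, 3] ![0, 3] ?_ ?_
  all_goals rw [Matrix.det_fin_two]; simp [hn.ne', hq.ne']

/-- The vortex-sheet boundary is characteristic of constant multiplicity two:
for `m, n, q > 0`, `p_m = p_n = q`, and `Φₜ + v·Φ₁ − u = 0`, the boundary matrix
`A₂(U) − Φₜ·I₄ − Φ₁·A₁(U)` has rank exactly 2. -/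
theorem boundary_matrix_rank_two (m n v u q Φt Φ1 : ℝ) (hm : 0 < m) (hn : 0 < n)
    (hq : 0 < q) (heik : Φt + v * Φ1 - u = 0) :
    (A2 m n v u q q - Φt • (1 : Matrix (Fin 4) (Fin 4) ℝ)
      - Φ1 • A1 m n v u q q).rank = 2 :=
  boundary_matrix_rank_two_general m n v u q Φt Φ1 hn hq heik
end
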